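/- For any eight vectors a, b, c, d, e, f, g, h ∈ ℂ⁴ the five-term Schouten identity holds: ⟨f g h a⟩⟨b c d e⟩ + ⟨f g h b⟩⟨c d e a⟩ + ⟨f g h c⟩⟨d e a b⟩ + ⟨f g h d⟩⟨e a b c⟩ + ⟨f g h e⟩⟨a b c d⟩ = 0. -/

import Mathlib

/-!
Five vectors in `ℂ⁴` satisfy the Cramer relation `∑ᵢ (-1)ⁱ ⟨v₀ … v̂ᵢ … v₄⟩ • vᵢ = 0`. For fixed
`f g h`, the map `x ↦ ⟨f g h x⟩` is linear, so applying it to this relation for `a b c d e` gives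
the identity, once each bracket is brought to the cyclic order of the statement (a cyclic shift of
four columns changes the sign).
-/

/-- Four-bracket: determinant of the 4×4 matrix whose columns are `a b c d`. -/
noncomputable def brk4 (a b c d : Fin 4 → ℂ) : ℂ :=
  Matrix.det (Matrix.of fun i j => ![a, b, c, d] j i)

open Matrix

/-- Expand along column `0` the determinant of the matrix `v` with its `k`-th column prepended:
it has two equal columns. -/
theorem Matrix.sum_negOnePow_det_succAbove_smul_eq_zero {R : Type*} [CommRing R] {n : ℕ}
    (v : Fin (n + 1) → Fin n → R) :
    ∑ i : Fin (n + 1), ((-1) ^ (i : ℕ) * (of (v ∘ i.succAbove)).det) • v i = 0 := by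
  ext k
  let N : Matrix (Fin (n + 1)) (Fin (n + 1)) R := of fun i => Fin.cons (v i k) (v i)
  calc (∑ i : Fin (n + 1), ((-1) ^ (i : ℕ) * (of (v ∘ i.succAbove)).det) • v i) k
      = ∑ i : Fin (n + 1), (-1) ^ (i : ℕ) * N i 0 * (N.submatrix i.succAbove Fin.succ).det := by
        simp only [Finset.sum_apply, Pi.smul_apply, smul_eq_mul]
        exact Finset.sum_congr rfl fun i _ => mul_right_comm _ _ _
    _ = N.det := (det_succ_column_zero N).symm
    _ = 0 := det_zero_of_column_eq (Fin.succ_ne_zero k).symm fun _ => rfl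

theorem brk4_eq_det (a b c d : Fin 4 → ℂ) : brk4 a b c d = (of ![a, b, c, d]).det :=
  det_transpose _

theorem brk4_rotate (a b c d : Fin 4 → ℂ) : brk4 b c d a = -brk4 a b c d := by
  have h := det_permute (finRotate 4) (of ![a, b, c, d])
  rw [sign_finRotate] at h
  norm_num at h
  rw [brk4_eq_det, brk4_eq_det, ← h]
  congr 1
  ext i j; fin_cases i <;> rfl

theorem brk4_cramer_relation (a b c d e : Fin 4 → ℂ) :
    brk4 b c d e • a - brk4 a c d e • b + brk4 a b d e • c - brk4 a b c e • d
      + brk4 a b c d • e = 0 := by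
  have h := sum_negOnePow_det_succAbove_smul_eq_zero ![a, b, c, d, e]
  have h0 : ![a, b, c, d, e] ∘ Fin.succAbove 0 = ![b, c, d, e] := by ext i; fin_cases i <;> rfl
  have h1 : ![a, b, c, d, e] ∘ Fin.succAbove 1 = ![a, c, d, e] := by ext i; fin_cases i <;> rfl
  have h2 : ![a, b, c, d, e] ∘ Fin.succAbove 2 = ![a, b, d, e] := by ext i; fin_cases i <;> rfl
  have h3 : ![a, b, c, d, e] ∘ Fin.succAbove 3 = ![a, b, c, e] := by ext i; fin_cases i <;> rfl
  have h4 : ![a, b, c, d, e] ∘ Fin.succAbove 4 = ![a, b, c, d] := by ext i; fin_cases i <;> rfl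
  rw [Fin.sum_univ_five, h0, h1, h2, h3, h4] at h
  simp only [Matrix.cons_val] at h
  norm_num at h
  simp only [brk4_eq_det]
  linear_combination h

noncomputable def brk4LinearMap (a b c : Fin 4 → ℂ) : (Fin 4 → ℂ) →ₗ[ℂ] ℂ :=
  (detRowAlternating : (Fin 4 → ℂ) [⋀^Fin 4]→ₗ[ℂ] ℂ).toLinearMap ![a, b, c, 0] 3

theorem brk4LinearMap_apply (a b c d : Fin 4 → ℂ) : brk4LinearMap a b c d = brk4 a b c d := by
  have hupd : Function.update ![a, b, c, 0] 3 d = ![a, b, c, d] := by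
    ext i : 1
    fin_cases i <;> rfl
  rw [brk4_eq_det, brk4LinearMap, MultilinearMap.toLinearMap_apply, hupd]
  rfl

/-- Five-term Schouten identity for eight vectors in `ℂ⁴`. -/
theorem five_term_schouten_identity (a b c d e f g h : Fin 4 → ℂ) :
    brk4 f g h a * brk4 b c d e + brk4 f g h b * brk4 c d e a +
      brk4 f g h c * brk4 d e a b + brk4 f g h d * brk4 e a b c +
      brk4 f g h e * brk4 a b c d = 0 := by
  have hrel := congrArg (brk4LinearMap f g h) (brk4_cramer_relation a b c d e)
  simp only [map_add, map_sub, map_smul, map_zero, brk4LinearMap_apply, smul_eq_mul] at hrel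
  have hc : brk4 c d e a = -brk4 a c d e := brk4_rotate a c d e
  have hd : brk4 d e a b = brk4 a b d e := by rw [brk4_rotate b d e a, brk4_rotate a b d e, neg_neg]
  have he : brk4 e a b c = -brk4 a b c e := by rw [brk4_rotate e a b c, neg_neg]
  rw [hc, hd, he]
  linear_combination hrel
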